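/- arXiv:2010.12306 — 5 statements merged into one kernel-verified Lean document; each statement's English description precedes it below -/
import Mathlib

section
/- Consider an L-layered feedforward neural network class F^NN as defined in the context, with every weight vector satisfying ‖w_m^{(ℓ)}‖₁ ≤ b, every bias satisfying |θ_m^{(ℓ)}| ≤ a, input vectors h_1,…,h_N ∈ ℝ^{n_0} satisfying ‖h_n‖_∞ ≤ c, and activation function σ that is Lipschitz with constant L_σ and satisfies σ(0) = 0. Then the empirical Rademacher average satisfies R(F^NN(h_1^N)) ≤ (2/√N)·[ (2 b L_σ)^{L−1} · b c · √(2 log(2 n_0)) + Σ_{ℓ=0}^{L−1} (2 b L_σ)^ℓ · a ]. -/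
/-!
Peel the network off one layer at a time. The nodes of a layer compute, up to a bias bounded by
`a`, combinations with `ℓ¹`-norm at most `b` of the activated nodes of the previous layer, so the
Rademacher complexity of a layer is at most `b` times that of the activated previous layer plus
`a` times that of the constant function `1`, and Khintchine's inequality bounds the latter by
`√N`. The Ledoux–Talagrand contraction principle removes the activation at the cost of a factor
`2 L_σ`; it is proved by replacing the coordinates by their images one at a time and pairing each
sign pattern with the one that differs from it in that coordinate. The first layer combines the
`n₀` input coordinates, a finite class bounded by Massart's lemma. The logit is the difference of
two output nodes, which costs a last factor `2`.
-/

/-- The real sign `±1` associated with a Boolean: `true ↦ +1`, `false ↦ −1`. -/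
def rsign (b : Bool) : ℝ := if b then 1 else -1

/-- The output of node `m` of layer `ℓ+1` (paper numbering: layer `ℓ+1 ∈ {1,…,L}`) of a
feedforward neural network with activation `σ`, layer sizes `n 0, n 1, …` (with `n 0` the
input dimension), weight matrices `W` and bias vectors `θ`, on input `h`:
`g^{(1)}_m(h) = Σ_j W^{(1)}_{mj} h_j − θ^{(1)}_m` and
`g^{(ℓ)}_m(h) = Σ_j W^{(ℓ)}_{mj} σ(g^{(ℓ−1)}_j(h)) − θ^{(ℓ)}_m` for `ℓ ≥ 2`. -/
noncomputable def layerOut (σ : ℝ → ℝ) (n : ℕ → ℕ)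
    (W : ∀ ℓ : ℕ, Fin (n (ℓ + 1)) → Fin (n ℓ) → ℝ)
    (θ : ∀ ℓ : ℕ, Fin (n (ℓ + 1)) → ℝ)
    (h : Fin (n 0) → ℝ) : (ℓ : ℕ) → Fin (n (ℓ + 1)) → ℝ
  | 0 => fun m => (∑ j, W 0 m j * h j) - θ 0 m
  | (ℓ + 1) => fun m => (∑ j, W (ℓ + 1) m j * σ (layerOut σ n W θ h ℓ j)) - θ (ℓ + 1) m

open Finset Real

lemma abs_rsign (b : Bool) : |rsign b| = 1 := by cases b <;> simp [rsign]

lemma rsign_not (b : Bool) : rsign (!b) = -rsign b := by cases b <;> simp [rsign]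

lemma rsign_sq (b : Bool) : rsign b ^ 2 = 1 := by cases b <;> simp [rsign]

lemma abs_ciSup_le_of_abs_le {ι : Type*} [Nonempty ι] {f : ι → ℝ} {a : ℝ} (h : ∀ i, |f i| ≤ a) :
    |⨆ i, f i| ≤ a := by
  have hbdd : BddAbove (Set.range f) := ⟨a, Set.forall_mem_range.2 fun i => (abs_le.1 (h i)).2⟩
  obtain ⟨i⟩ := ‹Nonempty ι›
  exact abs_le.2 ⟨(abs_le.1 (h i)).1.trans (le_ciSup hbdd i), ciSup_le fun i => (abs_le.1 (h i)).2⟩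

lemma ciSup_abs_le_ciSup_add_ciSup_neg {ι : Type*} {x : ι → ℝ} (h₁ : BddAbove (Set.range x))
    (h₂ : BddAbove (Set.range fun k => -x k)) {k₀ : ι} (hk₀ : x k₀ = 0) :
    ⨆ k, |x k| ≤ (⨆ k, x k) + ⨆ k, -x k := by
  have : Nonempty ι := ⟨k₀⟩
  have hx : 0 ≤ ⨆ k, x k := hk₀ ▸ le_ciSup h₁ k₀
  have hx' : 0 ≤ ⨆ k, -x k := by simpa [hk₀] using le_ciSup h₂ k₀
  exact ciSup_le fun k => abs_le'.2
    ⟨by linarith [le_ciSup h₁ k], by linarith [le_ciSup h₂ k]⟩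

/-- The two-point inequality behind the Ledoux–Talagrand comparison principle. -/
lemma ciSup_add_ciSup_sub_le {ι : Type*} [Nonempty ι] {c u v : ι → ℝ}
    (h₁ : BddAbove (Set.range fun k => c k + v k)) (h₂ : BddAbove (Set.range fun k => c k - v k))
    (huv : ∀ k l, |u k - u l| ≤ |v k - v l|) :
    (⨆ k, c k + u k) + (⨆ k, c k - u k) ≤ (⨆ k, c k + v k) + (⨆ k, c k - v k) := by
  refine ciSup_add_ciSup_le fun k l => ?_
  have hu := (abs_le.1 (huv k l)).2
  rcases le_total (v l) (v k) with hle | hle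
  · rw [abs_of_nonneg (sub_nonneg.2 hle)] at hu
    linarith [le_ciSup h₁ k, le_ciSup h₂ l]
  · rw [abs_of_nonpos (sub_nonpos.2 hle)] at hu
    linarith [le_ciSup h₁ l, le_ciSup h₂ k]

lemma exp_mul_ciSup_le_sum_exp {ι : Type*} [Fintype ι] [Nonempty ι] (x : ι → ℝ) (μ : ℝ) :
    exp (μ * ⨆ k, x k) ≤ ∑ k, exp (μ * x k) := by
  obtain ⟨k, hk⟩ := exists_eq_ciSup_of_finite (f := x)
  rw [← hk]
  exact single_le_sum (f := fun k => exp (μ * x k)) (fun _ _ => by positivity) (mem_univ k)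

lemma abs_apply_le_of_lipschitz {φ : ℝ → ℝ} {Lφ : ℝ} (hφ : ∀ x y, |φ x - φ y| ≤ Lφ * |x - y|)
    (hφ0 : φ 0 = 0) (x : ℝ) : |φ x| ≤ Lφ * |x| := by
  simpa [hφ0] using hφ x 0

lemma abs_sum_mul_sub_le {ν : Type*} [Fintype ν] {w y : ν → ℝ} {θ a b Y : ℝ}
    (hw : ∑ j, |w j| ≤ b) (hθ : |θ| ≤ a) (hy : ∀ j, |y j| ≤ Y) (hY : 0 ≤ Y) :
    |∑ j, w j * y j - θ| ≤ b * Y + a :=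
  calc |∑ j, w j * y j - θ| ≤ ∑ j, |w j| * |y j| + |θ| := by
        refine (abs_sub _ _).trans ?_
        gcongr
        simpa only [abs_mul] using abs_sum_le_sum_abs (fun j => w j * y j) univ
    _ ≤ (∑ j, |w j|) * Y + a := by
        rw [sum_mul]
        gcongr with j
        exact hy j
    _ ≤ b * Y + a := by gcongr

lemma le_sqrt_of_forall_le_div_add {x A B : ℝ} (hA : 0 < A)
    (h : ∀ μ > 0, x ≤ A / μ + μ * B / 2) : x ≤ √(2 * A * B) := by
  by_contra! hx
  have hx0 : 0 < x := (sqrt_nonneg _).trans_lt hx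
  have hsq : 2 * A * B < x ^ 2 := (sqrt_lt' hx0).1 hx
  have := h (2 * A / x) (by positivity)
  rw [div_div_eq_mul_div, show A * x / (2 * A) = x / 2 by field_simp,
    show 2 * A / x * B / 2 = A * B / x by ring] at this
  have : x / 2 ≤ A * B / x := by linarith
  rw [le_div_iff₀ hx0] at this
  nlinarith

lemma sum_le_card_mul_of_sum_exp_le {α : Type*} [Fintype α] {Y : α → ℝ} {c : ℝ}
    (h : ∑ a, exp (Y a) ≤ Fintype.card α * exp c) : ∑ a, Y a ≤ Fintype.card α * c := by
  -- `exp` lies above its tangent line at `c`; this replaces Jensen's inequality.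
  have htan : ∀ a, Y a ≤ c - 1 + exp (Y a) * exp (-c) := fun a => by
    have := add_one_le_exp (Y a - c)
    rw [sub_eq_add_neg, exp_add] at this
    linarith
  have hsum : ∑ a, exp (Y a) * exp (-c) ≤ Fintype.card α := by
    rw [← sum_mul]
    calc _ ≤ Fintype.card α * exp c * exp (-c) := by gcongr
      _ = Fintype.card α := by rw [mul_assoc, ← exp_add, add_neg_cancel, exp_zero, mul_one]
  calc ∑ a, Y a ≤ ∑ a, (c - 1 + exp (Y a) * exp (-c)) := sum_le_sum fun a _ => htan a
    _ ≤ Fintype.card α * c := by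
        rw [sum_add_distrib]
        simp only [sum_const, card_univ, nsmul_eq_mul]
        linarith

lemma le_pow_mul_add_geom_sum_mul {R : ℕ → ℝ} {q x y : ℝ} (hq : 0 ≤ q) (h₀ : R 0 ≤ x)
    (hsucc : ∀ ℓ, R (ℓ + 1) ≤ q * R ℓ + y) :
    ∀ ℓ, R ℓ ≤ q ^ ℓ * x + (∑ j ∈ range ℓ, q ^ j) * y
  | 0 => by simpa using h₀
  | ℓ + 1 => by
    calc R (ℓ + 1) ≤ q * R ℓ + y := hsucc ℓ
      _ ≤ q * (q ^ ℓ * x + (∑ j ∈ range ℓ, q ^ j) * y) + y := by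
          gcongr
          exact le_pow_mul_add_geom_sum_mul hq h₀ hsucc ℓ
      _ = q ^ (ℓ + 1) * x + (∑ j ∈ range (ℓ + 1), q ^ j) * y := by
          rw [geom_sum_succ]
          ring

/-- `2 ^ N * N` times the empirical Rademacher average of the class `{t k}`, taken with
`sup |·|`. -/
noncomputable def rademacherSum {ι : Type*} {N : ℕ} (t : ι → Fin N → ℝ) : ℝ :=
  ∑ s : Fin N → Bool, ⨆ k, |(rsign ∘ s) ⬝ᵥ t k|

section SignPatterns

variable {N : ℕ} {ι : Type*}

lemma abs_dotProduct_rsign_le (s : Fin N → Bool) {v : Fin N → ℝ} {K : ℝ} (hv : ∀ i, |v i| ≤ K) :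
    |(rsign ∘ s) ⬝ᵥ v| ≤ N * K :=
  calc |(rsign ∘ s) ⬝ᵥ v| ≤ ∑ i, |rsign (s i) * v i| := abs_sum_le_sum_abs _ _
    _ ≤ ∑ _i : Fin N, K := sum_le_sum fun i _ => by rw [abs_mul, abs_rsign, one_mul]; exact hv i
    _ = N * K := by simp

lemma bddAbove_abs_dotProduct_rsign {t : ι → Fin N → ℝ} {K : ℝ} (hK : ∀ k i, |t k i| ≤ K)
    (s : Fin N → Bool) : BddAbove (Set.range fun k => |(rsign ∘ s) ⬝ᵥ t k|) :=
  ⟨N * K, Set.forall_mem_range.2 fun k => abs_dotProduct_rsign_le s (hK k)⟩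

lemma bddAbove_dotProduct_rsign {t : ι → Fin N → ℝ} {K : ℝ} (hK : ∀ k i, |t k i| ≤ K)
    (s : Fin N → Bool) : BddAbove (Set.range fun k => (rsign ∘ s) ⬝ᵥ t k) :=
  ⟨N * K, Set.forall_mem_range.2 fun k => (le_abs_self _).trans (abs_dotProduct_rsign_le s (hK k))⟩

lemma sum_comp_update_not (i : Fin N) (F : (Fin N → Bool) → ℝ) :
    ∑ s, F (Function.update s i (!s i)) = ∑ s, F s := by
  have hinv : Function.Involutive fun s : Fin N → Bool => Function.update s i (!s i) := by
    intro s
    simp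
  exact Equiv.sum_comp (hinv.toPerm _) F

lemma dotProduct_sub_mul_eq {x y : Fin N → ℝ} (w : Fin N → ℝ) {i : Fin N}
    (h : ∀ j ≠ i, x j = y j) : w ⬝ᵥ x - w i * x i = w ⬝ᵥ y - w i * y i := by
  rw [sub_eq_sub_iff_sub_eq_sub, ← dotProduct_sub, ← mul_sub]
  exact Finset.sum_eq_single i (fun j _ hj => by simp [h j hj]) (by simp)

lemma dotProduct_rsign_update_not (s : Fin N → Bool) (i : Fin N) (v : Fin N → ℝ) :
    (rsign ∘ Function.update s i (!s i)) ⬝ᵥ v = (rsign ∘ s) ⬝ᵥ v - 2 * (rsign (s i) * v i) := by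
  have := dotProduct_sub_mul_eq v (x := rsign ∘ Function.update s i (!s i)) (y := rsign ∘ s)
    (i := i) fun j hj => by simp [Function.update_of_ne hj]
  simp only [dotProduct_comm _ v, Function.comp_apply, Function.update_self] at this ⊢
  rw [rsign_not] at this
  linarith

lemma sum_rsign_mul_rsign (i j : Fin N) :
    ∑ s : Fin N → Bool, rsign (s i) * rsign (s j) = if i = j then 2 ^ N else 0 := by
  split_ifs with hij
  · subst hij
    simp [← sq, rsign_sq]
  · have := sum_comp_update_not i fun s => rsign (s i) * rsign (s j)
    simp only [Function.update_self, Function.update_of_ne (Ne.symm hij), rsign_not, neg_mul,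
      sum_neg_distrib] at this
    linarith

lemma sum_sq_dotProduct_rsign (u : Fin N → ℝ) :
    ∑ s : Fin N → Bool, ((rsign ∘ s) ⬝ᵥ u) ^ 2 = 2 ^ N * ∑ i, u i ^ 2 :=
  calc ∑ s : Fin N → Bool, ((rsign ∘ s) ⬝ᵥ u) ^ 2
      = ∑ i, ∑ j, (∑ s : Fin N → Bool, rsign (s i) * rsign (s j)) * (u i * u j) := by
        simp only [sq, dotProduct, Function.comp_apply, sum_mul, mul_sum]
        rw [sum_comm]
        refine sum_congr rfl fun i _ => ?_
        rw [sum_comm]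
        exact sum_congr rfl fun j _ => sum_congr rfl fun s _ => by ring
    _ = 2 ^ N * ∑ i, u i ^ 2 := by
        simp [sum_rsign_mul_rsign, mul_sum, sq]

/-- Khintchine's inequality with constant `1`. -/
lemma sum_abs_dotProduct_rsign_le (u : Fin N → ℝ) :
    ∑ s : Fin N → Bool, |(rsign ∘ s) ⬝ᵥ u| ≤ 2 ^ N * √(∑ i, u i ^ 2) := by
  have hcs := sq_sum_le_card_mul_sum_sq (s := (univ : Finset (Fin N → Bool)))
    (f := fun s => |(rsign ∘ s) ⬝ᵥ u|)
  simp only [sq_abs, sum_sq_dotProduct_rsign, card_univ, Fintype.card_fun, Fintype.card_bool,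
    Fintype.card_fin, Nat.cast_pow, Nat.cast_ofNat] at hcs
  calc _ ≤ √(2 ^ N * (2 ^ N * ∑ i, u i ^ 2)) := le_sqrt_of_sq_le hcs
    _ = 2 ^ N * √(∑ i, u i ^ 2) := by
        rw [← mul_assoc, sqrt_mul (by positivity), ← sq, sqrt_sq (by positivity)]

lemma sum_abs_dotProduct_rsign_one_le :
    ∑ s : Fin N → Bool, |(rsign ∘ s) ⬝ᵥ 1| ≤ 2 ^ N * √N := by
  simpa using sum_abs_dotProduct_rsign_le (1 : Fin N → ℝ)

end SignPatterns

section Contraction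

variable {N : ℕ} {ι : Type*}

lemma sum_ciSup_dotProduct_rsign_le_of_eq_of_ne [Nonempty ι] {f g : ι → Fin N → ℝ} {K : ℝ}
    (i : Fin N) (hg : ∀ k j, |g k j| ≤ K) (hfg : ∀ k, ∀ j ≠ i, f k j = g k j)
    (hi : ∀ k l, |f k i - f l i| ≤ |g k i - g l i|) :
    ∑ s, ⨆ k, (rsign ∘ s) ⬝ᵥ f k ≤ ∑ s, ⨆ k, (rsign ∘ s) ⬝ᵥ g k := by
  -- A sign pattern and its flip at `i` share the contribution `c` of the other coordinates and
  -- give opposite signs to coordinate `i`.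
  have hpair : ∀ s, (⨆ k, (rsign ∘ s) ⬝ᵥ f k) +
      (⨆ k, (rsign ∘ Function.update s i (!s i)) ⬝ᵥ f k) ≤
      (⨆ k, (rsign ∘ s) ⬝ᵥ g k) + (⨆ k, (rsign ∘ Function.update s i (!s i)) ⬝ᵥ g k) := by
    intro s
    set r := rsign (s i)
    set c : ι → ℝ := fun k => (rsign ∘ s) ⬝ᵥ g k - r * g k i
    have hf₁ : ∀ k, (rsign ∘ s) ⬝ᵥ f k = c k + r * f k i := fun k => by
      have := dotProduct_sub_mul_eq (rsign ∘ s) (hfg k)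
      simp only [Function.comp_apply] at this
      simp only [c, r]
      linarith
    have hf₂ : ∀ k, (rsign ∘ Function.update s i (!s i)) ⬝ᵥ f k = c k - r * f k i := fun k => by
      rw [dotProduct_rsign_update_not, hf₁]; ring
    have hg₁ : ∀ k, (rsign ∘ s) ⬝ᵥ g k = c k + r * g k i := fun k => by ring
    have hg₂ : ∀ k, (rsign ∘ Function.update s i (!s i)) ⬝ᵥ g k = c k - r * g k i := fun k => by
      rw [dotProduct_rsign_update_not]; ring
    have hr : ∀ x y : ℝ, |r * x - r * y| = |x - y| := fun x y => by
      rw [← mul_sub, abs_mul, abs_rsign, one_mul]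
    simp only [hf₁, hf₂, hg₁, hg₂]
    refine ciSup_add_ciSup_sub_le ?_ ?_ fun k l => by simpa only [hr] using hi k l
    · simpa only [hg₁] using bddAbove_dotProduct_rsign hg s
    · simpa only [hg₂] using bddAbove_dotProduct_rsign hg (Function.update s i (!s i))
  have hsum := sum_le_sum fun s (_ : s ∈ univ) => hpair s
  rw [sum_add_distrib, sum_add_distrib, sum_comp_update_not i fun s => ⨆ k, (rsign ∘ s) ⬝ᵥ f k,
    sum_comp_update_not i fun s => ⨆ k, (rsign ∘ s) ⬝ᵥ g k] at hsum
  linarith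

/-- The Ledoux–Talagrand comparison principle. -/
theorem sum_ciSup_dotProduct_rsign_le [Nonempty ι] {u v : ι → Fin N → ℝ} {K : ℝ}
    (hu : ∀ k i, |u k i| ≤ K) (hv : ∀ k i, |v k i| ≤ K)
    (huv : ∀ i k l, |u k i - u l i| ≤ |v k i - v l i|) :
    ∑ s, ⨆ k, (rsign ∘ s) ⬝ᵥ u k ≤ ∑ s, ⨆ k, (rsign ∘ s) ⬝ᵥ v k := by
  classical
  let hybrid (A : Finset (Fin N)) (k : ι) (i : Fin N) : ℝ := if i ∈ A then u k i else v k i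
  have hbound : ∀ A k i, |hybrid A k i| ≤ K := fun A k i => by
    by_cases hi : i ∈ A <;> simp [hybrid, hi, hu, hv]
  have hstep : ∀ A, ∑ s, ⨆ k, (rsign ∘ s) ⬝ᵥ hybrid A k ≤ ∑ s, ⨆ k, (rsign ∘ s) ⬝ᵥ v k := by
    intro A
    induction A using Finset.induction_on with
    | empty => simp [hybrid]
    | insert i A hiA ih =>
      refine le_trans (sum_ciSup_dotProduct_rsign_le_of_eq_of_ne i (hbound A) ?_ ?_) ih
      · intro k j hj
        simp [hybrid, hj]
      · simpa [hybrid, hiA] using huv i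
  simpa [hybrid] using hstep univ

lemma sum_ciSup_dotProduct_rsign_comp_le [Nonempty ι] {t : ι → Fin N → ℝ} {K : ℝ}
    (hK : ∀ k i, |t k i| ≤ K) {φ : ℝ → ℝ} {Lφ : ℝ} (hLφ : 0 ≤ Lφ)
    (hφ : ∀ x y, |φ x - φ y| ≤ Lφ * |x - y|) (hφt : ∀ k i, |φ (t k i)| ≤ Lφ * K) :
    ∑ s, ⨆ k, (rsign ∘ s) ⬝ᵥ (φ ∘ t k) ≤ Lφ * rademacherSum t := by
  have hLt : ∀ k i, |(Lφ • t k) i| ≤ Lφ * K := fun k i => by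
    simpa [abs_mul, abs_of_nonneg hLφ] using mul_le_mul_of_nonneg_left (hK k i) hLφ
  refine (sum_ciSup_dotProduct_rsign_le hφt hLt fun i k l => ?_).trans ?_
  · simpa [← mul_sub, abs_mul, abs_of_nonneg hLφ] using hφ (t k i) (t l i)
  · simp only [rademacherSum, dotProduct_smul, smul_eq_mul, ← Real.mul_iSup_of_nonneg hLφ,
      mul_sum]
    exact sum_le_sum fun s _ => mul_le_mul_of_nonneg_left
      (ciSup_mono (bddAbove_abs_dotProduct_rsign hK s) fun k => le_abs_self _) hLφ

theorem rademacherSum_comp_le {t : ι → Fin N → ℝ} {K : ℝ} (hK : ∀ k i, |t k i| ≤ K) {k₀ : ι}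
    (hk₀ : t k₀ = 0) {φ : ℝ → ℝ} {Lφ : ℝ} (hLφ : 0 ≤ Lφ)
    (hφ : ∀ x y, |φ x - φ y| ≤ Lφ * |x - y|) (hφ0 : φ 0 = 0) :
    rademacherSum (fun k => φ ∘ t k) ≤ 2 * Lφ * rademacherSum t := by
  have : Nonempty ι := ⟨k₀⟩
  have hφt : ∀ k i, |φ (t k i)| ≤ Lφ * K := fun k i =>
    (abs_apply_le_of_lipschitz hφ hφ0 _).trans (by gcongr; exact hK k i)
  have hneg : ∀ x y, |-φ x - -φ y| ≤ Lφ * |x - y| := fun x y => by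
    rw [neg_sub_neg, abs_sub_comm]; exact hφ x y
  have hsplit : ∀ s : Fin N → Bool, ⨆ k, |(rsign ∘ s) ⬝ᵥ (φ ∘ t k)| ≤
      (⨆ k, (rsign ∘ s) ⬝ᵥ (φ ∘ t k)) + ⨆ k, (rsign ∘ s) ⬝ᵥ ((fun x => -φ x) ∘ t k) := by
    intro s
    have hneg_eq : ∀ k, (rsign ∘ s) ⬝ᵥ ((fun x => -φ x) ∘ t k) = -((rsign ∘ s) ⬝ᵥ (φ ∘ t k)) :=
      fun k => by rw [← dotProduct_neg]; rfl
    simp only [hneg_eq]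
    refine ciSup_abs_le_ciSup_add_ciSup_neg (bddAbove_dotProduct_rsign hφt s) ?_ (k₀ := k₀) ?_
    · simpa only [hneg_eq] using bddAbove_dotProduct_rsign (t := fun k => (fun x => -φ x) ∘ t k)
        (fun k i => by simpa using hφt k i) s
    · simp [hk₀, hφ0]
  calc rademacherSum (fun k => φ ∘ t k)
      ≤ (∑ s, ⨆ k, (rsign ∘ s) ⬝ᵥ (φ ∘ t k))
        + ∑ s, ⨆ k, (rsign ∘ s) ⬝ᵥ ((fun x => -φ x) ∘ t k) := by
        rw [← sum_add_distrib]; exact sum_le_sum fun s _ => hsplit s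
    _ ≤ Lφ * rademacherSum t + Lφ * rademacherSum t := add_le_add
        (sum_ciSup_dotProduct_rsign_comp_le hK hLφ hφ hφt)
        (sum_ciSup_dotProduct_rsign_comp_le hK hLφ hneg fun k i => by simpa using hφt k i)
    _ = 2 * Lφ * rademacherSum t := by ring

end Contraction

section Massart

variable {N : ℕ} {ι : Type*}

lemma sum_exp_mul_dotProduct_rsign_le (u : Fin N → ℝ) (μ : ℝ) :
    ∑ s : Fin N → Bool, exp (μ * (rsign ∘ s) ⬝ᵥ u) ≤ 2 ^ N * exp (μ ^ 2 * (∑ i, u i ^ 2) / 2) :=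
  calc ∑ s : Fin N → Bool, exp (μ * (rsign ∘ s) ⬝ᵥ u)
      = ∏ i, ∑ b, exp (μ * (rsign b * u i)) := by
        rw [Fintype.prod_sum]
        simp only [dotProduct, mul_sum, exp_sum, Function.comp_apply]
    _ = ∏ i, 2 * cosh (μ * u i) := prod_congr rfl fun i _ => by
        simp [rsign, cosh_eq]
        ring_nf
    _ ≤ ∏ i, 2 * exp ((μ * u i) ^ 2 / 2) :=
        prod_le_prod (fun i _ => by positivity) fun i _ => by gcongr; exact cosh_le_exp_half_sq _
    _ = 2 ^ N * exp (μ ^ 2 * (∑ i, u i ^ 2) / 2) := by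
        rw [prod_mul_distrib, ← exp_sum, prod_const, card_univ, Fintype.card_fin, mul_sum, sum_div]
        simp only [mul_pow]

/-- Massart's finite class lemma, one-sided form. -/
theorem sum_ciSup_dotProduct_rsign_le_sqrt [Fintype ι] (hι : 1 < Fintype.card ι)
    {v : ι → Fin N → ℝ} {D : ℝ} (hv : ∀ k, ∑ i, v k i ^ 2 ≤ D) :
    ∑ s : Fin N → Bool, ⨆ k, (rsign ∘ s) ⬝ᵥ v k ≤ 2 ^ N * √(2 * log (Fintype.card ι) * D) := by
  have : Nonempty ι := Fintype.card_pos_iff.1 (by omega)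
  have hcard : (1 : ℝ) < Fintype.card ι := by exact_mod_cast hι
  have hsigns : (Fintype.card (Fin N → Bool) : ℝ) = 2 ^ N := by simp
  suffices h : ∀ μ > 0, (∑ s : Fin N → Bool, ⨆ k, (rsign ∘ s) ⬝ᵥ v k) / 2 ^ N ≤
      log (Fintype.card ι) / μ + μ * D / 2 by
    rw [← div_le_iff₀' (by positivity)]
    exact le_sqrt_of_forall_le_div_add (log_pos hcard) h
  intro μ hμ
  have hmgf : ∑ s : Fin N → Bool, exp (μ * ⨆ k, (rsign ∘ s) ⬝ᵥ v k) ≤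
      Fintype.card (Fin N → Bool) * exp (log (Fintype.card ι) + μ ^ 2 * D / 2) :=
    calc _ ≤ ∑ s : Fin N → Bool, ∑ k, exp (μ * (rsign ∘ s) ⬝ᵥ v k) :=
          sum_le_sum fun s _ => exp_mul_ciSup_le_sum_exp _ μ
      _ = ∑ k, ∑ s : Fin N → Bool, exp (μ * (rsign ∘ s) ⬝ᵥ v k) := sum_comm
      _ ≤ ∑ _k : ι, 2 ^ N * exp (μ ^ 2 * D / 2) := sum_le_sum fun k _ =>
          (sum_exp_mul_dotProduct_rsign_le (v k) μ).trans <| by gcongr; exact hv k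
      _ = _ := by
          rw [exp_add, exp_log (by linarith), hsigns]
          simp only [sum_const, card_univ, nsmul_eq_mul]
          ring
  have := sum_le_card_mul_of_sum_exp_le hmgf
  rw [hsigns, ← mul_sum] at this
  rw [div_le_iff₀ (by positivity)]
  field_simp
  nlinarith

/-- Massart's finite class lemma. -/
theorem rademacherSum_le_sqrt [Fintype ι] {v : ι → Fin N → ℝ} {D : ℝ}
    (hv : ∀ k, ∑ i, v k i ^ 2 ≤ D) :
    rademacherSum v ≤ 2 ^ N * √(2 * log (2 * Fintype.card ι) * D) := by
  rcases isEmpty_or_nonempty ι with hι | hι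
  · simp only [rademacherSum, Real.iSup_of_isEmpty, sum_const_zero]
    positivity
  -- `|x|` is the larger of `x` and `-x`, so pass to the class `{±v k}` of twice the size.
  let w : ι × Bool → Fin N → ℝ := fun kb => rsign kb.2 • v kb.1
  have hw : ∀ kb, ∑ i, w kb i ^ 2 ≤ D := fun kb => by simpa [w, mul_pow, rsign_sq] using hv kb.1
  have hcard : Fintype.card (ι × Bool) = 2 * Fintype.card ι := by
    rw [Fintype.card_prod, Fintype.card_bool, mul_comm]
  have hmassart := sum_ciSup_dotProduct_rsign_le_sqrt
    (by rw [hcard]; have := Fintype.card_pos (α := ι); omega) hw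
  rw [hcard, Nat.cast_mul, Nat.cast_two] at hmassart
  refine le_trans (sum_le_sum fun s _ => ?_) hmassart
  have hbdd : BddAbove (Set.range fun kb => (rsign ∘ s) ⬝ᵥ w kb) := (Set.finite_range _).bddAbove
  exact ciSup_le fun k => abs_le'.2
    ⟨le_ciSup_of_le hbdd (k, true) (by simp [w, rsign]),
      le_ciSup_of_le hbdd (k, false) (by simp [w, rsign])⟩

end Massart

section AffineLayer

variable {N : ℕ} {ν : Type*} [Fintype ν]

lemma dotProduct_sum_mul_sub (r : Fin N → ℝ) (w : ν → ℝ) (x : ν → Fin N → ℝ) (θ : ℝ) :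
    r ⬝ᵥ (fun i => ∑ j, w j * x j i - θ) = ∑ j, w j * (r ⬝ᵥ x j) - θ * (r ⬝ᵥ 1) := by
  simp only [dotProduct, mul_sub, mul_sum, sum_sub_distrib, Pi.one_apply, mul_one]
  rw [sum_comm]
  congr 1
  · exact sum_congr rfl fun j _ => sum_congr rfl fun i _ => by ring
  · exact sum_congr rfl fun i _ => mul_comm _ _

theorem rademacherSum_le_of_affine {τ κ : Type*} {T : τ → Fin N → ℝ} {G : κ → Fin N → ℝ}
    {K a b : ℝ} (ha : 0 ≤ a) (hb : 0 ≤ b) (hG : ∀ k i, |G k i| ≤ K)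
    (hT : ∀ t, T t = 0 ∨ ∃ (w : ν → ℝ) (g : ν → κ) (θ : ℝ),
      ∑ j, |w j| ≤ b ∧ |θ| ≤ a ∧ T t = fun i => ∑ j, w j * G (g j) i - θ) :
    rademacherSum T ≤ b * rademacherSum G + a * ∑ s : Fin N → Bool, |(rsign ∘ s) ⬝ᵥ 1| := by
  rw [rademacherSum, rademacherSum, mul_sum, mul_sum, ← sum_add_distrib]
  refine sum_le_sum fun s _ => ?_
  have hY : 0 ≤ ⨆ k, |(rsign ∘ s) ⬝ᵥ G k| := Real.iSup_nonneg fun k => abs_nonneg _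
  refine Real.iSup_le (fun t => ?_) (by positivity)
  rcases hT t with ht | ⟨w, g, θ, hw, hθ, ht⟩
  · rw [ht, dotProduct_zero, abs_zero]
    positivity
  · rw [ht, dotProduct_sum_mul_sub]
    refine abs_sum_mul_sub_le hw (by rw [abs_mul]; gcongr) (fun j => ?_) hY
    exact le_ciSup (bddAbove_abs_dotProduct_rsign hG s) (g j)

end AffineLayer

section Network

variable {σ : ℝ → ℝ} {n : ℕ → ℕ} {a b c Lσ : ℝ} {N : ℕ}

abbrev NetworkParam (n : ℕ → ℕ) (a b : ℝ) : Type :=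
  {p : (∀ ℓ : ℕ, Fin (n (ℓ + 1)) → Fin (n ℓ) → ℝ) × (∀ ℓ : ℕ, Fin (n (ℓ + 1)) → ℝ) //
    (∀ ℓ m, ∑ j, |p.1 ℓ m j| ≤ b) ∧ (∀ ℓ m, |p.2 ℓ m| ≤ a)}

lemma NetworkParam.nonempty (ha : 0 ≤ a) (hb : 0 ≤ b) : Nonempty (NetworkParam n a b) :=
  ⟨⟨(0, 0), by simp [ha, hb]⟩⟩

/-- The class of functions on the samples `h` computed by the nodes of layer `ℓ + 1`; the index
`none` adds the zero function, so that the class contains `0` even when the layer is empty. -/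
noncomputable def nodeOutputs (σ : ℝ → ℝ) (n : ℕ → ℕ) (a b : ℝ) (h : Fin N → Fin (n 0) → ℝ)
    (ℓ : ℕ) : Option (NetworkParam n a b × Fin (n (ℓ + 1))) → Fin N → ℝ
  | none => 0
  | some (p, m) => fun i => layerOut σ n p.1.1 p.1.2 (h i) ℓ m

lemma exists_abs_layerOut_le (hLσ : 0 ≤ Lσ) (hlip : ∀ s t, |σ s - σ t| ≤ Lσ * |s - t|)
    (hσ0 : σ 0 = 0) (ha : 0 ≤ a) (hb : 0 ≤ b) (hc : 0 ≤ c) :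
    ∀ ℓ, ∃ K, 0 ≤ K ∧ ∀ (p : NetworkParam n a b) m (x : Fin (n 0) → ℝ), (∀ j, |x j| ≤ c) →
      |layerOut σ n p.1.1 p.1.2 x ℓ m| ≤ K
  | 0 => ⟨b * c + a, by positivity, fun p m _ hx =>
      abs_sum_mul_sub_le (p.2.1 0 m) (p.2.2 0 m) hx hc⟩
  | ℓ + 1 => by
    obtain ⟨K, hK₀, hK⟩ := exists_abs_layerOut_le hLσ hlip hσ0 ha hb hc ℓ
    refine ⟨b * (Lσ * K) + a, by positivity, fun p m x hx =>
      abs_sum_mul_sub_le (p.2.1 _ m) (p.2.2 _ m) (fun j => ?_) (by positivity)⟩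
    exact (abs_apply_le_of_lipschitz hlip hσ0 _).trans (by gcongr; exact hK p j x hx)

lemma exists_abs_nodeOutputs_le (hLσ : 0 ≤ Lσ) (hlip : ∀ s t, |σ s - σ t| ≤ Lσ * |s - t|)
    (hσ0 : σ 0 = 0) (ha : 0 ≤ a) (hb : 0 ≤ b) (hc : 0 ≤ c) {h : Fin N → Fin (n 0) → ℝ}
    (hbound : ∀ i j, |h i j| ≤ c) (ℓ : ℕ) :
    ∃ K, ∀ q i, |nodeOutputs σ n a b h ℓ q i| ≤ K := by
  obtain ⟨K, hK₀, hK⟩ := exists_abs_layerOut_le hLσ hlip hσ0 ha hb hc ℓ (n := n)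
  refine ⟨K, fun q i => ?_⟩
  rcases q with _ | ⟨p, m⟩
  · simpa [nodeOutputs] using hK₀
  · exact hK p m (h i) (hbound i)

lemma rademacherSum_inputs_le (hc : 0 ≤ c) {h : Fin N → Fin (n 0) → ℝ}
    (hbound : ∀ i j, |h i j| ≤ c) :
    rademacherSum (fun j i => h i j) ≤ 2 ^ N * √N * (c * √(2 * log (2 * n 0))) := by
  refine (rademacherSum_le_sqrt (D := N * c ^ 2) fun j => ?_).trans_eq ?_
  · simpa using sum_le_sum fun i (_ : i ∈ univ) => sq_le_sq' (abs_le.1 (hbound i j)).1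
      (abs_le.1 (hbound i j)).2
  · rw [Fintype.card_fin, mul_comm _ (N * c ^ 2 : ℝ), sqrt_mul (by positivity),
      sqrt_mul N.cast_nonneg, sqrt_sq hc]
    ring

lemma rademacherSum_nodeOutputs_zero_le (ha : 0 ≤ a) (hb : 0 ≤ b) (hc : 0 ≤ c)
    {h : Fin N → Fin (n 0) → ℝ} (hbound : ∀ i j, |h i j| ≤ c) :
    rademacherSum (nodeOutputs σ n a b h 0) ≤
      b * (2 ^ N * √N * (c * √(2 * log (2 * n 0)))) + a * (2 ^ N * √N) := by
  refine (rademacherSum_le_of_affine ha hb (fun j i => hbound i j) (ν := Fin (n 0))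
    (G := fun j i => h i j) ?_).trans ?_
  · rintro (_ | ⟨p, m⟩)
    · exact Or.inl rfl
    · exact Or.inr ⟨p.1.1 0 m, id, p.1.2 0 m, p.2.1 0 m, p.2.2 0 m, rfl⟩
  · gcongr
    · exact rademacherSum_inputs_le hc hbound
    · exact sum_abs_dotProduct_rsign_one_le

lemma rademacherSum_nodeOutputs_succ_le (hLσ : 0 ≤ Lσ)
    (hlip : ∀ s t, |σ s - σ t| ≤ Lσ * |s - t|) (hσ0 : σ 0 = 0) (ha : 0 ≤ a) (hb : 0 ≤ b)
    (hc : 0 ≤ c) {h : Fin N → Fin (n 0) → ℝ} (hbound : ∀ i j, |h i j| ≤ c) (ℓ : ℕ) :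
    rademacherSum (nodeOutputs σ n a b h (ℓ + 1)) ≤
      2 * b * Lσ * rademacherSum (nodeOutputs σ n a b h ℓ) + a * (2 ^ N * √N) := by
  obtain ⟨K, hK⟩ := exists_abs_nodeOutputs_le hLσ hlip hσ0 ha hb hc hbound ℓ
  have hσK : ∀ q i, |(σ ∘ nodeOutputs σ n a b h ℓ q) i| ≤ Lσ * K := fun q i =>
    (abs_apply_le_of_lipschitz hlip hσ0 _).trans (by gcongr; exact hK q i)
  refine (rademacherSum_le_of_affine ha hb hσK (ν := Fin (n (ℓ + 1))) ?_).trans ?_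
  · rintro (_ | ⟨p, m⟩)
    · exact Or.inl rfl
    · exact Or.inr ⟨p.1.1 (ℓ + 1) m, fun j => some (p, j), p.1.2 (ℓ + 1) m, p.2.1 _ m,
        p.2.2 _ m, rfl⟩
  · calc _ ≤ b * (2 * Lσ * rademacherSum (nodeOutputs σ n a b h ℓ)) + a * (2 ^ N * √N) := by
          gcongr
          · exact rademacherSum_comp_le hK (k₀ := none) rfl hLσ hlip hσ0
          · exact sum_abs_dotProduct_rsign_one_le
      _ = _ := by ring

theorem rademacherSum_nodeOutputs_le (hLσ : 0 ≤ Lσ) (hlip : ∀ s t, |σ s - σ t| ≤ Lσ * |s - t|)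
    (hσ0 : σ 0 = 0) (ha : 0 ≤ a) (hb : 0 ≤ b) (hc : 0 ≤ c) {h : Fin N → Fin (n 0) → ℝ}
    (hbound : ∀ i j, |h i j| ≤ c) (ℓ : ℕ) :
    rademacherSum (nodeOutputs σ n a b h ℓ) ≤ 2 ^ N * √N *
      ((2 * b * Lσ) ^ ℓ * b * c * √(2 * log (2 * n 0)) +
        ∑ j ∈ range (ℓ + 1), (2 * b * Lσ) ^ j * a) := by
  refine (le_pow_mul_add_geom_sum_mul (R := fun ℓ => rademacherSum (nodeOutputs σ n a b h ℓ))
    (by positivity) (rademacherSum_nodeOutputs_zero_le ha hb hc hbound)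
    (rademacherSum_nodeOutputs_succ_le hLσ hlip hσ0 ha hb hc hbound) ℓ).trans_eq ?_
  rw [← sum_mul, sum_range_succ]
  ring

end Network

lemma abs_one_div_mul_dotProduct_rsign_sub_le {N : ℕ} {ι : Type*} {t : ι → Fin N → ℝ} {K : ℝ}
    (hK : ∀ k i, |t k i| ≤ K) (s : Fin N → Bool) (k₀ k₁ : ι) :
    |1 / N * (rsign ∘ s) ⬝ᵥ (t k₀ - t k₁)| ≤ 2 / N * ⨆ k, |(rsign ∘ s) ⬝ᵥ t k| := by
  have h₀ := le_ciSup (bddAbove_abs_dotProduct_rsign hK s) k₀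
  have h₁ := le_ciSup (bddAbove_abs_dotProduct_rsign hK s) k₁
  rw [dotProduct_sub, abs_mul, abs_of_nonneg (by positivity)]
  calc 1 / N * |(rsign ∘ s) ⬝ᵥ t k₀ - (rsign ∘ s) ⬝ᵥ t k₁|
      ≤ 1 / N * (|(rsign ∘ s) ⬝ᵥ t k₀| + |(rsign ∘ s) ⬝ᵥ t k₁|) := by gcongr; exact abs_sub _ _
    _ ≤ 2 / N * ⨆ k, |(rsign ∘ s) ⬝ᵥ t k| := by
        rw [div_eq_mul_one_div 2]
        nlinarith [show (0 : ℝ) ≤ 1 / N by positivity]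

/-- Rademacher complexity of feedforward neural networks: for an `L`-layered
feedforward neural network class (layer sizes `n 1,…,n L` with `n L = 2`, input dimension
`n 0`, logit `f^{NN}(h) = g^{(L)}_1(h) − g^{(L)}_2(h)`) with all weight vectors satisfying
`‖w^{(ℓ)}_m‖₁ ≤ b`, all biases satisfying `|θ^{(ℓ)}_m| ≤ a`, inputs `‖h_i‖_∞ ≤ c`, and an
`L_σ`-Lipschitz activation with `σ(0) = 0`, the empirical Rademacher average satisfies
`R(F^{NN}(h_1^N)) ≤ (2/√N)[(2bL_σ)^{L−1} bc √(2 log(2 n_0)) + Σ_{ℓ=0}^{L−1} (2bL_σ)^ℓ a]`.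
The expectation over the i.i.d. uniform signs is written as the average over all `2^N`
sign patterns `s : Fin N → Bool`. -/
theorem rademacher_fnn
    (L : ℕ) (hL : 0 < L) (n : ℕ → ℕ) (hnL : n L = 2)
    (σ : ℝ → ℝ) (Lσ : ℝ) (hLσ : 0 ≤ Lσ)
    (hlip : ∀ s t, |σ s - σ t| ≤ Lσ * |s - t|) (hσ0 : σ 0 = 0)
    (a b c : ℝ) (ha : 0 ≤ a) (hb : 0 ≤ b) (hc : 0 ≤ c)
    (N : ℕ)
    (h : Fin N → Fin (n 0) → ℝ) (hbound : ∀ i j, |h i j| ≤ c) :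
    (∑ s : Fin N → Bool,
        |⨆ p : {p : (∀ ℓ : ℕ, Fin (n (ℓ + 1)) → Fin (n ℓ) → ℝ)
                  × (∀ ℓ : ℕ, Fin (n (ℓ + 1)) → ℝ) //
              (∀ ℓ m, ∑ j, |p.1 ℓ m j| ≤ b) ∧ (∀ ℓ m, |p.2 ℓ m| ≤ a)},
          ((1 : ℝ) / N) * ∑ i, rsign (s i) *
            (layerOut σ n p.1.1 p.1.2 (h i) (L - 1)
                ⟨0, by rw [Nat.sub_add_cancel hL, hnL]; norm_num⟩
              - layerOut σ n p.1.1 p.1.2 (h i) (L - 1)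
                ⟨1, by rw [Nat.sub_add_cancel hL, hnL]; norm_num⟩)|) / 2 ^ N
      ≤ (2 / Real.sqrt N) *
          ((2 * b * Lσ) ^ (L - 1) * b * c * Real.sqrt (2 * Real.log (2 * n 0))
            + ∑ ℓ ∈ Finset.range L, (2 * b * Lσ) ^ ℓ * a) := by
  have := NetworkParam.nonempty (n := n) ha hb
  obtain ⟨K, hK⟩ := exists_abs_nodeOutputs_le hLσ hlip hσ0 ha hb hc hbound (L - 1)
  have hR := rademacherSum_nodeOutputs_le hLσ hlip hσ0 ha hb hc hbound (L - 1)
  rw [show range (L - 1 + 1) = range L by rw [Nat.sub_add_cancel hL]] at hR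
  calc _ ≤ (∑ s : Fin N → Bool,
          2 / N * ⨆ q, |(rsign ∘ s) ⬝ᵥ nodeOutputs σ n a b h (L - 1) q|) / 2 ^ N := by
        gcongr with s
        exact abs_ciSup_le_of_abs_le fun p =>
          abs_one_div_mul_dotProduct_rsign_sub_le hK s (some (p, _)) (some (p, _))
    _ = 2 / N * rademacherSum (nodeOutputs σ n a b h (L - 1)) / 2 ^ N := by
        rw [rademacherSum, mul_sum]
    _ ≤ 2 / N * (2 ^ N * √N * ((2 * b * Lσ) ^ (L - 1) * b * c * √(2 * log (2 * n 0)) +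
          ∑ j ∈ range L, (2 * b * Lσ) ^ j * a)) / 2 ^ N := by gcongr
    _ = _ := by
        have hscale : ∀ X : ℝ, 2 / N * (2 ^ N * √N * X) / 2 ^ N = 2 / √N * X := fun X => by
          rw [← mul_one_div 2 (√N), ← sqrt_div_self']
          field_simp
        exact hscale _
end

section
/- Let π_1,…,π_K be positive weights summing to 1, and for each k let f_k be a bounded measurable function on H_k. Then the network risk satisfies R(f) = Σ_{k=1}^K π_k R_k(f_k) ≥ log( 1 + exp( −(μ^+(f) − μ^−(f))/2 ) ), where μ^±(f) = Σ_{k=1}^K π_k μ_k^±(f_k). -/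
/-!
The loss `softplus x = log (1 + eˣ)` is convex, its derivative being the sigmoid. For each `k`,
Jensen's inequality applied to the two class-conditional integrals, followed by midpoint
convexity, gives `softplus (-(μₖ⁺ - μₖ⁻) / 2) ≤ Rₖ(fₖ)`. Averaging with the weights `πₖ` and
applying the finite Jensen inequality to the convex `softplus` yields the bound.
-/

open MeasureTheory

noncomputable def softplus (x : ℝ) : ℝ := Real.log (1 + Real.exp x)

lemma hasDerivAt_softplus (x : ℝ) : HasDerivAt softplus (Real.sigmoid x) x := by
  refine (((Real.hasDerivAt_exp x).const_add 1).log (by positivity)).congr_deriv ?_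
  rw [Real.sigmoid_def, Real.exp_neg]
  field_simp
  ring

lemma deriv_softplus : deriv softplus = Real.sigmoid :=
  funext fun x => (hasDerivAt_softplus x).deriv

lemma differentiable_softplus : Differentiable ℝ softplus :=
  fun x => (hasDerivAt_softplus x).differentiableAt

lemma convexOn_softplus : ConvexOn ℝ Set.univ softplus :=
  (deriv_softplus ▸ Real.sigmoid_monotone).convexOn_univ_of_deriv differentiable_softplus

lemma softplus_nonneg (x : ℝ) : 0 ≤ softplus x :=
  Real.log_nonneg (by linarith [Real.exp_pos x])

lemma softplus_le_abs_add_log_two (x : ℝ) : softplus x ≤ |x| + Real.log 2 := by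
  have h : 1 + Real.exp x ≤ 2 * Real.exp |x| := by
    have h1 : 1 ≤ Real.exp |x| := Real.one_le_exp (abs_nonneg x)
    have h2 : Real.exp x ≤ Real.exp |x| := Real.exp_le_exp.2 (le_abs_self x)
    linarith
  calc softplus x ≤ Real.log (2 * Real.exp |x|) := Real.log_le_log (by positivity) h
    _ = |x| + Real.log 2 := by
        rw [Real.log_mul two_ne_zero (Real.exp_pos _).ne', Real.log_exp, add_comm]

section Integral

variable {α : Type*} [MeasurableSpace α] {μ : Measure α} {g : α → ℝ}

lemma MeasureTheory.Integrable.softplus_comp [IsFiniteMeasure μ] (hg : Integrable g μ) :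
    Integrable (fun x => softplus (g x)) μ := by
  refine (hg.abs.add (integrable_const (Real.log 2))).mono'
    (differentiable_softplus.continuous.comp_aestronglyMeasurable hg.aestronglyMeasurable) ?_
  filter_upwards with x
  rw [Real.norm_of_nonneg (softplus_nonneg _)]
  exact softplus_le_abs_add_log_two _

lemma softplus_integral_le [IsProbabilityMeasure μ] (hg : Integrable g μ) :
    softplus (∫ x, g x ∂μ) ≤ ∫ x, softplus (g x) ∂μ :=
  convexOn_softplus.map_integral_le differentiable_softplus.continuous.continuousOn isClosed_univ
    (by simp) hg hg.softplus_comp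

end Integral

/-- The risk `R_k` of the paper, with `P = L_k⁺` and `Q = L_k⁻`. -/
noncomputable def logisticRisk {α : Type*} [MeasurableSpace α] (P Q : Measure α) (g : α → ℝ) :
    ℝ :=
  (1 / 2) * ∫ x, softplus (-g x) ∂P + (1 / 2) * ∫ x, softplus (g x) ∂Q

lemma softplus_neg_half_sub_le (a b : ℝ) :
    softplus (-((a - b) / 2)) ≤ (1 / 2) * softplus (-a) + (1 / 2) * softplus b := by
  have h := convexOn_softplus.2 (Set.mem_univ (-a)) (Set.mem_univ b)
    (by norm_num : (0 : ℝ) ≤ 1 / 2) (by norm_num : (0 : ℝ) ≤ 1 / 2) (by norm_num)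
  simp only [smul_eq_mul] at h
  calc softplus (-((a - b) / 2)) = softplus ((1 / 2) * -a + (1 / 2) * b) := by ring_nf
    _ ≤ _ := h

lemma softplus_neg_half_mean_gap_le_logisticRisk {α : Type*} [MeasurableSpace α]
    {P Q : Measure α} [IsProbabilityMeasure P] [IsProbabilityMeasure Q] {g : α → ℝ}
    (hP : Integrable g P) (hQ : Integrable g Q) :
    softplus (-((∫ x, g x ∂P - ∫ x, g x ∂Q) / 2)) ≤ logisticRisk P Q g := by
  have hneg : softplus (-∫ x, g x ∂P) ≤ ∫ x, softplus (-g x) ∂P := by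
    have h := softplus_integral_le (μ := P) (g := fun x => -g x) hP.neg
    rwa [integral_neg] at h
  calc softplus (-((∫ x, g x ∂P - ∫ x, g x ∂Q) / 2))
      ≤ (1 / 2) * softplus (-∫ x, g x ∂P) + (1 / 2) * softplus (∫ x, g x ∂Q) :=
        softplus_neg_half_sub_le _ _
    _ ≤ logisticRisk P Q g := by
        unfold logisticRisk
        gcongr
        exact softplus_integral_le hQ

/-- With positive weights `π_1,…,π_K` summing to 1 and bounded measurable
functions `f_k` on `H_k`, the network logistic risk `R(f) = Σ_k π_k R_k(f_k)` satisfies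
`R(f) ≥ log(1 + exp(−(μ⁺(f) − μ⁻(f))/2))`. -/
theorem network_risk_lower_bound
    {K : ℕ} (H : Fin K → Type*) [∀ k, MeasurableSpace (H k)]
    (Lp Lm : ∀ k, Measure (H k))
    [∀ k, IsProbabilityMeasure (Lp k)] [∀ k, IsProbabilityMeasure (Lm k)]
    (f : ∀ k, H k → ℝ) (hf : ∀ k, Measurable (f k))
    (C : Fin K → ℝ) (hbd : ∀ k h, |f k h| ≤ C k)
    (π : Fin K → ℝ) (hπ : ∀ k, 0 < π k) (hπs : ∑ k, π k = 1) :
    ∑ k, π k * ((1/2) * (∫ h, Real.log (1 + Real.exp (-(f k h))) ∂(Lp k))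
        + (1/2) * (∫ h, Real.log (1 + Real.exp (f k h)) ∂(Lm k)))
    ≥ Real.log (1 + Real.exp (-(((∑ k, π k * ∫ h, f k h ∂(Lp k))
        - ∑ k, π k * ∫ h, f k h ∂(Lm k)) / 2))) := by
  set negHalfGap : Fin K → ℝ := fun k => -((∫ h, f k h ∂(Lp k) - ∫ h, f k h ∂(Lm k)) / 2)
  have hnegHalfGap : ∑ k, π k * negHalfGap k
      = -(((∑ k, π k * ∫ h, f k h ∂(Lp k)) - ∑ k, π k * ∫ h, f k h ∂(Lm k)) / 2) := by
    rw [← Finset.sum_sub_distrib, Finset.sum_div, ← Finset.sum_neg_distrib]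
    exact Finset.sum_congr rfl fun k _ => by ring
  have hjensen : softplus (∑ k, π k * negHalfGap k) ≤ ∑ k, π k * softplus (negHalfGap k) :=
    convexOn_softplus.map_sum_le (fun k _ => (hπ k).le) hπs (fun k _ => Set.mem_univ _)
  have hint : ∀ k (μ : Measure (H k)) [IsProbabilityMeasure μ], Integrable (f k) μ :=
    fun k _ _ => .of_bound (hf k).aestronglyMeasurable (C k) (.of_forall (hbd k))
  have hclass : ∀ k, softplus (negHalfGap k) ≤ logisticRisk (Lp k) (Lm k) (f k) := fun k =>
    softplus_neg_half_mean_gap_le_logisticRisk (hint k _) (hint k _)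
  rw [← hnegHalfGap]
  calc softplus (∑ k, π k * negHalfGap k) ≤ ∑ k, π k * softplus (negHalfGap k) := hjensen
    _ ≤ ∑ k, π k * logisticRisk (Lp k) (Lm k) (f k) :=
        Finset.sum_le_sum fun k _ => mul_le_mul_of_nonneg_left (hclass k) (hπ k).le
end

section
/- Let L^+ and L^- be probability measures on a measurable space H and let f : H → ℝ be bounded and measurable. Then the logistic risk satisfies R(f) ≥ log( 1 + exp( −(μ^+(f) − μ^−(f))/2 ) ). -/
/-!
The logistic loss `ℓ(x) = log (1 + e^{-x})` is convex, its derivative being `σ(x) - 1` with `σ`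
the (increasing) sigmoid. The risk is `½ 𝔼_{L⁺} ℓ(f) + ½ 𝔼_{L⁻} ℓ(-f)`; Jensen's inequality on each
class bounds it below by `½ ℓ(μ⁺) + ½ ℓ(-μ⁻)`, and midpoint convexity of `ℓ` by `ℓ((μ⁺ - μ⁻)/2)`.
-/

open MeasureTheory Real Set

noncomputable def logisticLoss (x : ℝ) : ℝ := log (1 + exp (-x))

lemma hasDerivAt_logisticLoss (x : ℝ) : HasDerivAt logisticLoss (sigmoid x - 1) x := by
  refine ((((hasDerivAt_neg x).exp).const_add 1).log (by positivity)).congr_deriv ?_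
  rw [sigmoid_def]
  field_simp
  ring

lemma convexOn_logisticLoss : ConvexOn ℝ univ logisticLoss := by
  have hderiv : deriv logisticLoss = fun x => sigmoid x - 1 :=
    funext fun x => (hasDerivAt_logisticLoss x).deriv
  refine Monotone.convexOn_univ_of_deriv
    (fun x => (hasDerivAt_logisticLoss x).differentiableAt) ?_
  rw [hderiv]
  exact fun a b hab => sub_le_sub_right (sigmoid_monotone hab) 1

lemma continuous_logisticLoss : Continuous logisticLoss :=
  continuous_iff_continuousAt.2 fun x => (hasDerivAt_logisticLoss x).continuousAt

section Bounded

variable {α : Type*} [MeasurableSpace α] {μ : Measure α} {g : α → ℝ} {B : ℝ}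

lemma Continuous.integrable_comp_of_abs_le [IsFiniteMeasure μ] {φ : ℝ → ℝ} (hφ : Continuous φ)
    (hg : Measurable g) (hB : ∀ x, |g x| ≤ B) : Integrable (φ ∘ g) μ := by
  obtain ⟨C, hC⟩ := (isCompact_closedBall (0 : ℝ) B).exists_bound_of_continuousOn hφ.continuousOn
  refine Integrable.of_bound (hφ.measurable.comp hg).aestronglyMeasurable C
    (Filter.Eventually.of_forall fun x => hC (g x) ?_)
  simpa [Metric.mem_closedBall, Real.dist_eq] using hB x

lemma ConvexOn.map_integral_le_of_abs_le [IsProbabilityMeasure μ] {φ : ℝ → ℝ}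
    (hφ : ConvexOn ℝ univ φ) (hφc : Continuous φ) (hg : Measurable g) (hB : ∀ x, |g x| ≤ B) :
    φ (∫ x, g x ∂μ) ≤ ∫ x, φ (g x) ∂μ :=
  hφ.map_integral_le hφc.continuousOn isClosed_univ (Filter.Eventually.of_forall fun _ => trivial)
    (continuous_id.integrable_comp_of_abs_le hg hB) (hφc.integrable_comp_of_abs_le hg hB)

end Bounded

/-- For probability measures `L⁺, L⁻` on a measurable space `H` and a bounded
measurable `f : H → ℝ`, the logistic risk under uniform class prior satisfies
`R(f) ≥ log(1 + exp(−(μ⁺(f) − μ⁻(f))/2))`. -/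
theorem logistic_risk_lower_bound
    {H : Type*} [MeasurableSpace H]
    (Lp Lm : Measure H) [IsProbabilityMeasure Lp] [IsProbabilityMeasure Lm]
    (f : H → ℝ) (hf : Measurable f) (B : ℝ) (hB : ∀ h, |f h| ≤ B) :
    (1/2) * (∫ h, Real.log (1 + Real.exp (-(f h))) ∂Lp)
      + (1/2) * (∫ h, Real.log (1 + Real.exp (f h)) ∂Lm)
    ≥ Real.log (1 + Real.exp (-(((∫ h, f h ∂Lp) - ∫ h, f h ∂Lm) / 2))) := by
  set a := ∫ h, f h ∂Lp
  set b := ∫ h, f h ∂Lm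
  have jensen_pos : logisticLoss a ≤ ∫ h, logisticLoss (f h) ∂Lp :=
    convexOn_logisticLoss.map_integral_le_of_abs_le continuous_logisticLoss hf hB
  have jensen_neg : logisticLoss (-b) ≤ ∫ h, logisticLoss (-f h) ∂Lm := by
    rw [← integral_neg]
    exact convexOn_logisticLoss.map_integral_le_of_abs_le continuous_logisticLoss hf.neg
      (fun h => (abs_neg (f h)).trans_le (hB h))
  have midpoint :
      logisticLoss ((a - b) / 2) ≤ (1/2) * logisticLoss a + (1/2) * logisticLoss (-b) := by
    have h := convexOn_logisticLoss.2 (mem_univ a) (mem_univ (-b)) (by norm_num : (0 : ℝ) ≤ 1/2)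
      (by norm_num : (0 : ℝ) ≤ 1/2) (by norm_num)
    rwa [smul_eq_mul, smul_eq_mul, show (1/2) * a + (1/2) * -b = (a - b) / 2 by ring] at h
  simp only [logisticLoss, neg_neg] at jensen_pos jensen_neg midpoint
  linarith
end

section
/- Let π_1,…,π_K be positive weights summing to 1 and f_k bounded measurable functions on H_k. If the network risk satisfies R(f) = Σ_{k=1}^K π_k R_k(f_k) ≤ log(1 + e^{−d}) for some real d, then (μ^+(f) − μ^−(f))/2 ≥ d, where μ^±(f) = Σ_{k=1}^K π_k μ_k^±(f_k). -/
open MeasureTheory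

/-- The logistic loss `t ↦ log (1 + exp (-t))` and its derivative. -/
private lemma logistic_hasDerivAt (t : ℝ) :
    HasDerivAt (fun t : ℝ => Real.log (1 + Real.exp (-t)))
      (-Real.exp (-t) / (1 + Real.exp (-t))) t := by
  have h : HasDerivAt (fun t : ℝ => 1 + Real.exp (-t)) (-Real.exp (-t)) t := by
    simpa using ((hasDerivAt_neg t).exp.const_add 1)
  exact h.log (by positivity)

private lemma logistic_deriv_eq (t : ℝ) :
    -Real.exp (-t) / (1 + Real.exp (-t)) = -(1 / (Real.exp t + 1)) := by
  rw [Real.exp_neg]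
  have h : Real.exp t > 0 := Real.exp_pos t
  field_simp

private lemma logistic_convex :
    ConvexOn ℝ Set.univ (fun t : ℝ => Real.log (1 + Real.exp (-t))) := by
  apply Monotone.convexOn_univ_of_deriv
  · intro t
    exact (logistic_hasDerivAt t).differentiableAt
  · intro a b hab
    rw [(logistic_hasDerivAt a).deriv, (logistic_hasDerivAt b).deriv,
      logistic_deriv_eq, logistic_deriv_eq]
    have ha : (0:ℝ) < Real.exp a + 1 := by positivity
    have : 1 / (Real.exp b + 1) ≤ 1 / (Real.exp a + 1) :=
      one_div_le_one_div_of_le ha (by linarith [Real.exp_le_exp.mpr hab])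
    linarith

/-- Tangent-line bound for the logistic loss at the point `G`. -/
private lemma logistic_tangent (G t : ℝ) :
    Real.log (1 + Real.exp (-G)) + (-Real.exp (-G) / (1 + Real.exp (-G))) * (t - G)
      ≤ Real.log (1 + Real.exp (-t)) := by
  set φ : ℝ → ℝ := fun t => Real.log (1 + Real.exp (-t)) with hφ
  set c : ℝ := -Real.exp (-G) / (1 + Real.exp (-G)) with hc
  rcases lt_trichotomy t G with h | h | h
  · have hs := logistic_convex.slope_le_of_hasDerivAt (Set.mem_univ t) (Set.mem_univ G) h
      (logistic_hasDerivAt G)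
    rw [slope_def_field] at hs
    have hpos : (0:ℝ) < G - t := by linarith
    rw [div_le_iff₀ hpos] at hs
    nlinarith [hs]
  · simp [h]
  · have hs := logistic_convex.le_slope_of_hasDerivAt (Set.mem_univ G) (Set.mem_univ t) h
      (logistic_hasDerivAt G)
    rw [slope_def_field] at hs
    have hpos : (0:ℝ) < t - G := by linarith
    rw [le_div_iff₀ hpos] at hs
    nlinarith [hs]

private lemma integrable_of_bdd {α : Type*} [MeasurableSpace α] (μ : Measure α)
    [IsProbabilityMeasure μ] {g : α → ℝ} (hm : Measurable g) {B : ℝ}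
    (hb : ∀ x, |g x| ≤ B) : Integrable g μ :=
  ⟨hm.aestronglyMeasurable,
    HasFiniteIntegral.of_bounded (C := B) (ae_of_all _ fun x => by
      simpa [Real.norm_eq_abs] using hb x)⟩

/-- If the network logistic risk `R(f) = Σ_k π_k R_k(f_k)` satisfies
`R(f) ≤ log(1 + e^{−d})` for some real `d`, then `(μ⁺(f) − μ⁻(f))/2 ≥ d`. -/
theorem risk_implies_mean_gap
    {K : ℕ} (H : Fin K → Type*) [∀ k, MeasurableSpace (H k)]
    (Lp Lm : ∀ k, Measure (H k))
    [∀ k, IsProbabilityMeasure (Lp k)] [∀ k, IsProbabilityMeasure (Lm k)]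
    (f : ∀ k, H k → ℝ) (hf : ∀ k, Measurable (f k))
    (C : Fin K → ℝ) (hbd : ∀ k h, |f k h| ≤ C k)
    (π : Fin K → ℝ) (hπ : ∀ k, 0 < π k) (hπs : ∑ k, π k = 1)
    (d : ℝ)
    (hrisk : ∑ k, π k * ((1/2) * (∫ h, Real.log (1 + Real.exp (-(f k h))) ∂(Lp k))
        + (1/2) * (∫ h, Real.log (1 + Real.exp (f k h)) ∂(Lm k)))
      ≤ Real.log (1 + Real.exp (-d))) :
    ((∑ k, π k * ∫ h, f k h ∂(Lp k)) - ∑ k, π k * ∫ h, f k h ∂(Lm k)) / 2 ≥ d := by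
  set G : ℝ := ((∑ k, π k * ∫ h, f k h ∂(Lp k)) - ∑ k, π k * ∫ h, f k h ∂(Lm k)) / 2 with hG
  set c : ℝ := -Real.exp (-G) / (1 + Real.exp (-G)) with hc
  set L : ℝ := Real.log (1 + Real.exp (-G)) with hL
  -- boundedness of the logistic losses
  have hlogbd : ∀ (k : Fin K) (x : ℝ), |x| ≤ C k →
      |Real.log (1 + Real.exp x)| ≤ Real.log (1 + Real.exp (C k)) := by
    intro k x hx
    have h1 : (0:ℝ) ≤ Real.log (1 + Real.exp x) :=
      Real.log_nonneg (by nlinarith [Real.exp_pos x])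
    rw [abs_of_nonneg h1]
    apply Real.log_le_log (by positivity)
    have : Real.exp x ≤ Real.exp (C k) := Real.exp_le_exp.mpr (le_trans (le_abs_self x) hx)
    linarith
  -- key per-component integral bounds
  have hA : ∀ k, L + c * ((∫ h, f k h ∂(Lp k)) - G)
      ≤ ∫ h, Real.log (1 + Real.exp (-(f k h))) ∂(Lp k) := by
    intro k
    have hint_f : Integrable (f k) (Lp k) := integrable_of_bdd _ (hf k) (hbd k)
    have hint_φ : Integrable (fun h => Real.log (1 + Real.exp (-(f k h)))) (Lp k) := by
      apply integrable_of_bdd _ ((measurable_const.add (hf k).neg.exp).log)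
      intro x
      exact hlogbd k (-(f k x)) (by simpa [abs_neg] using hbd k x)
    have hi : Integrable (fun h => c * (f k h - G)) (Lp k) :=
      (hint_f.sub (integrable_const G)).const_mul c
    have h1 : ∫ h, (L + c * (f k h - G)) ∂(Lp k)
        = L + c * ((∫ h, f k h ∂(Lp k)) - G) := by
      rw [integral_add (integrable_const _) hi, integral_const, integral_const_mul,
        integral_sub hint_f (integrable_const _), integral_const]
      simp
    rw [← h1]
    exact integral_mono ((integrable_const _).add hi) hint_φ
      (fun h => logistic_tangent G (f k h))
  have hB : ∀ k, L + c * ((-(∫ h, f k h ∂(Lm k))) - G)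
      ≤ ∫ h, Real.log (1 + Real.exp (f k h)) ∂(Lm k) := by
    intro k
    have hint_f : Integrable (f k) (Lm k) := integrable_of_bdd _ (hf k) (hbd k)
    have hint_φ : Integrable (fun h => Real.log (1 + Real.exp (f k h))) (Lm k) := by
      apply integrable_of_bdd _ ((measurable_const.add (hf k).exp).log)
      intro x
      exact hlogbd k (f k x) (hbd k x)
    have hi : Integrable (fun h => c * (-(f k h) - G)) (Lm k) :=
      (hint_f.neg.sub (integrable_const G)).const_mul c
    have h1 : ∫ h, (L + c * (-(f k h) - G)) ∂(Lm k)
        = L + c * ((-(∫ h, f k h ∂(Lm k))) - G) := by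
      have hnegf : Integrable (fun h => -(f k h)) (Lm k) := hint_f.neg
      rw [integral_add (integrable_const _) hi, integral_const, integral_const_mul,
        integral_sub hnegf (integrable_const _), integral_neg, integral_const]
      simp
    rw [← h1]
    refine integral_mono ((integrable_const _).add hi) hint_φ (fun h => ?_)
    simpa using logistic_tangent G (-(f k h))
  -- summation step
  have hsum : L ≤ ∑ k, π k * ((1/2) * (∫ h, Real.log (1 + Real.exp (-(f k h))) ∂(Lp k))
      + (1/2) * (∫ h, Real.log (1 + Real.exp (f k h)) ∂(Lm k))) := by
    have step1 : L = ∑ k, π k * (L + c * (((∫ h, f k h ∂(Lp k)) - (∫ h, f k h ∂(Lm k))) / 2 - G)) := by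
      have expand : ∀ k : Fin K, π k * (L + c * (((∫ h, f k h ∂(Lp k)) - (∫ h, f k h ∂(Lm k))) / 2 - G))
          = π k * L + c / 2 * (π k * (∫ h, f k h ∂(Lp k))) - c / 2 * (π k * (∫ h, f k h ∂(Lm k)))
            - c * G * π k := by
        intro k; ring
      rw [Finset.sum_congr rfl (fun k _ => expand k)]
      simp only [Finset.sum_sub_distrib, Finset.sum_add_distrib, ← Finset.mul_sum,
        ← Finset.sum_mul, hπs]
      rw [hG]
      ring
    rw [step1]
    apply Finset.sum_le_sum
    intro k _
    have h1 := hA k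
    have h2 := hB k
    have hπk := (hπ k).le
    have hin : L + c * (((∫ h, f k h ∂(Lp k)) - (∫ h, f k h ∂(Lm k))) / 2 - G)
        ≤ (1/2) * (∫ h, Real.log (1 + Real.exp (-(f k h))) ∂(Lp k))
          + (1/2) * (∫ h, Real.log (1 + Real.exp (f k h)) ∂(Lm k)) := by
      linarith
    exact mul_le_mul_of_nonneg_left hin hπk
  -- conclude
  have hfinal : Real.log (1 + Real.exp (-G)) ≤ Real.log (1 + Real.exp (-d)) :=
    le_trans hsum hrisk
  by_contra hlt
  push_neg at hlt
  have : Real.exp (-d) < Real.exp (-G) := Real.exp_lt_exp.mpr (by linarith)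
  have hlog : Real.log (1 + Real.exp (-d)) < Real.log (1 + Real.exp (-G)) :=
    Real.log_lt_log (by positivity) (by linarith)
  linarith
end

section
/- Let x_1,…,x_N be points in a set X, let F be a class of functions from X to ℝ that is uniformly bounded on {x_1,…,x_N}, and let φ : ℝ → ℝ be Lipschitz with constant L and satisfy φ(0) = 0. Then E[ sup_{f∈F} | (1/N) Σ_{n=1}^N r_n φ(f(x_n)) | ] ≤ 2L · E[ sup_{f∈F} | (1/N) Σ_{n=1}^N r_n f(x_n) | ], where r_1,…,r_N are i.i.d. uniform on {−1,+1}. -/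
namespace RadCon

lemma abs_rsign (b : Bool) : |rsign b| = 1 := by cases b <;> simp [rsign]

lemma rsign_not (b : Bool) : rsign (!b) = - rsign b := by cases b <;> simp [rsign]

lemma bdd_of_abs_le {ι : Type*} {f : ι → ℝ} {M : ℝ} (h : ∀ i, |f i| ≤ M) :
    BddAbove (Set.range f) :=
  ⟨M, by rintro _ ⟨i, rfl⟩; exact (abs_le.1 (h i)).2⟩

lemma pos_add_pos_le {A B A' B' : ℝ} (h1 : A ≤ max A' B') (h2 : B ≤ max A' B')
    (h3 : A + B ≤ A' + B') :
    max A 0 + max B 0 ≤ max A' 0 + max B' 0 := by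
  have hm : max A' B' ≤ max A' 0 + max B' 0 :=
    max_le (le_add_of_le_of_nonneg (le_max_left _ _) (le_max_right _ _))
      (le_add_of_nonneg_of_le (le_max_right _ _) (le_max_left _ _))
  rcases le_total A 0 with hA | hA <;> rcases le_total B 0 with hB | hB
  · rw [max_eq_right hA, max_eq_right hB]
    linarith [le_max_right A' (0:ℝ), le_max_right B' (0:ℝ)]
  · rw [max_eq_right hA, max_eq_left hB]; linarith
  · rw [max_eq_left hA, max_eq_right hB]; linarith
  · rw [max_eq_left hA, max_eq_left hB]
    linarith [le_max_left A' (0:ℝ), le_max_left B' (0:ℝ)]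

lemma key {ι : Type*} [Nonempty ι] (φ : ℝ → ℝ) (L : ℝ) (hL : 0 ≤ L)
    (hlip : ∀ s t, |φ s - φ t| ≤ L * |s - t|) (hφ0 : φ 0 = 0)
    (a b : ι → ℝ) (M K : ℝ) (ha : ∀ i, |a i| ≤ M) (hb : ∀ i, |b i| ≤ K) :
    max (⨆ i, (a i + φ (b i))) 0 + max (⨆ i, (a i - φ (b i))) 0
      ≤ max (⨆ i, (a i + L * b i)) 0 + max (⨆ i, (a i - L * b i)) 0 := by
  have hφ' : ∀ t : ℝ, |φ t| ≤ L * |t| := by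
    intro t
    have h := hlip t 0
    rwa [hφ0, sub_zero, sub_zero] at h
  have hφb : ∀ i, |φ (b i)| ≤ L * K :=
    fun i => (hφ' (b i)).trans (mul_le_mul_of_nonneg_left (hb i) hL)
  have hLb : ∀ i, |L * b i| ≤ L * K := by
    intro i
    rw [abs_mul, abs_of_nonneg hL]
    exact mul_le_mul_of_nonneg_left (hb i) hL
  have habs : ∀ (u v : ℝ), |u| ≤ M → |v| ≤ L * K → |u + v| ≤ M + L * K :=
    fun u v h1 h2 => (abs_add_le _ _).trans (add_le_add h1 h2)
  have hB1 : BddAbove (Set.range fun i => a i + φ (b i)) :=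
    bdd_of_abs_le (fun i => habs _ _ (ha i) (hφb i))
  have hB2 : BddAbove (Set.range fun i => a i - φ (b i)) :=
    bdd_of_abs_le (fun i => by
      rw [sub_eq_add_neg]; exact habs _ _ (ha i) (by rw [abs_neg]; exact hφb i))
  have hB3 : BddAbove (Set.range fun i => a i + L * b i) :=
    bdd_of_abs_le (fun i => habs _ _ (ha i) (hLb i))
  have hB4 : BddAbove (Set.range fun i => a i - L * b i) :=
    bdd_of_abs_le (fun i => by
      rw [sub_eq_add_neg]; exact habs _ _ (ha i) (by rw [abs_neg]; exact hLb i))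
  have key2 : ∀ i j, (a i + φ (b i)) + (a j - φ (b j))
      ≤ (⨆ i, (a i + L * b i)) + (⨆ i, (a i - L * b i)) := by
    intro i j
    have hd : φ (b i) - φ (b j) ≤ L * |b i - b j| := (le_abs_self _).trans (hlip _ _)
    rcases le_total (b j) (b i) with h | h
    · rw [abs_of_nonneg (by linarith : (0:ℝ) ≤ b i - b j)] at hd
      have e1 : a i + L * b i ≤ ⨆ i, (a i + L * b i) := le_ciSup hB3 i
      have e2 : a j - L * b j ≤ ⨆ i, (a i - L * b i) := le_ciSup hB4 j
      have hr : L * (b i - b j) = L * b i - L * b j := by ring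
      linarith
    · rw [abs_sub_comm, abs_of_nonneg (by linarith : (0:ℝ) ≤ b j - b i)] at hd
      have e1 : a j + L * b j ≤ ⨆ i, (a i + L * b i) := le_ciSup hB3 j
      have e2 : a i - L * b i ≤ ⨆ i, (a i - L * b i) := le_ciSup hB4 i
      have hr : L * (b j - b i) = L * b j - L * b i := by ring
      linarith
  have h3 : (⨆ i, (a i + φ (b i))) + (⨆ i, (a i - φ (b i)))
      ≤ (⨆ i, (a i + L * b i)) + (⨆ i, (a i - L * b i)) := by
    have h' : (⨆ i, (a i + φ (b i)))
        ≤ (⨆ i, (a i + L * b i)) + (⨆ i, (a i - L * b i)) - (⨆ i, (a i - φ (b i))) := by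
      apply ciSup_le
      intro i
      rw [le_sub_iff_add_le', ← le_sub_iff_add_le]
      apply ciSup_le
      intro j
      have := key2 i j
      linarith
    linarith
  have h1 : (⨆ i, (a i + φ (b i)))
      ≤ max (⨆ i, (a i + L * b i)) (⨆ i, (a i - L * b i)) := by
    apply ciSup_le
    intro i
    have hφi : φ (b i) ≤ L * |b i| := (le_abs_self _).trans (hφ' (b i))
    rcases le_total 0 (b i) with h | h
    · rw [abs_of_nonneg h] at hφi
      exact le_max_of_le_left ((by linarith : a i + φ (b i) ≤ a i + L * b i).trans (le_ciSup hB3 i))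
    · rw [abs_of_nonpos h] at hφi
      have : a i + φ (b i) ≤ a i - L * b i := by
        have : L * -b i = -(L * b i) := by ring
        linarith [hφi, this]
      exact le_max_of_le_right (this.trans (le_ciSup hB4 i))
  have h2 : (⨆ i, (a i - φ (b i)))
      ≤ max (⨆ i, (a i + L * b i)) (⨆ i, (a i - L * b i)) := by
    apply ciSup_le
    intro i
    have hφi : -φ (b i) ≤ L * |b i| := (neg_le_abs _).trans (hφ' (b i))
    rcases le_total 0 (b i) with h | h
    · rw [abs_of_nonneg h] at hφi
      exact le_max_of_le_left ((by linarith : a i - φ (b i) ≤ a i + L * b i).trans (le_ciSup hB3 i))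
    · rw [abs_of_nonpos h] at hφi
      have hle : a i - φ (b i) ≤ a i - L * b i := by
        have : L * -b i = -(L * b i) := by ring
        linarith [hφi, this]
      exact le_max_of_le_right (hle.trans (le_ciSup hB4 i))
  exact pos_add_pos_le h1 h2 h3

lemma sum_flip {N : ℕ} (κ : Fin N) (f : (Fin N → Bool) → ℝ) :
    2 * ∑ s : Fin N → Bool, f s
      = ∑ s : Fin N → Bool,
          (f (Function.update s κ true) + f (Function.update s κ false)) := by
  have hinv : Function.Involutive
      (fun s : Fin N → Bool => Function.update s κ (!s κ)) := by
    intro s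
    funext n
    rcases eq_or_ne n κ with rfl | hn
    · simp
    · simp [Function.update_of_ne hn]
  have hb : ∑ s : Fin N → Bool, f (Function.update s κ (!s κ))
      = ∑ s : Fin N → Bool, f s :=
    Fintype.sum_bijective _ hinv.bijective _ _ (fun s => rfl)
  calc 2 * ∑ s : Fin N → Bool, f s
      = ∑ s : Fin N → Bool, f s + ∑ s : Fin N → Bool, f (Function.update s κ (!s κ)) := by
        rw [hb]; ring
    _ = ∑ s : Fin N → Bool, (f s + f (Function.update s κ (!s κ))) :=
        (Finset.sum_add_distrib).symm
    _ = ∑ s : Fin N → Bool,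
          (f (Function.update s κ true) + f (Function.update s κ false)) := by
        apply Finset.sum_congr rfl
        intro s _
        have hself : Function.update s κ (s κ) = s := Function.update_eq_self κ s
        cases hsk : s κ
        · have h1 : f s = f (Function.update s κ false) := by rw [hsk] at hself; rw [hself]
          rw [h1]
          simp only [Bool.not_false]
          rw [add_comm]
        · have h1 : f s = f (Function.update s κ true) := by rw [hsk] at hself; rw [hself]
          rw [h1]
          simp only [Bool.not_true]


lemma comparison {ι : Type*} [Nonempty ι] {N : ℕ} (φ : ℝ → ℝ) (L : ℝ) (hL : 0 ≤ L)
    (hlip : ∀ s t, |φ s - φ t| ≤ L * |s - t|) (hφ0 : φ 0 = 0)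
    (b : ι → Fin N → ℝ) (C : ℝ) (hC : ∀ i n, |b i n| ≤ C) :
    ∑ s : Fin N → Bool, max (⨆ i, ∑ n, rsign (s n) * φ (b i n)) 0
      ≤ ∑ s : Fin N → Bool, max (⨆ i, ∑ n, rsign (s n) * (L * b i n)) 0 := by
  have hφ' : ∀ t : ℝ, |φ t| ≤ L * |t| := by
    intro t
    have h := hlip t 0
    rwa [hφ0, sub_zero, sub_zero] at h
  set g : ℕ → ι → Fin N → ℝ :=
    fun k i n => if (n : ℕ) < k then L * b i n else φ (b i n) with hg
  have hgb : ∀ k i n, |g k i n| ≤ L * C := by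
    intro k i n
    by_cases h : (n : ℕ) < k
    · simp only [hg, if_pos h]
      rw [abs_mul, abs_of_nonneg hL]
      exact mul_le_mul_of_nonneg_left (hC i n) hL
    · simp only [hg, if_neg h]
      exact (hφ' (b i n)).trans (mul_le_mul_of_nonneg_left (hC i n) hL)
  have step : ∀ k : ℕ,
      (∑ s : Fin N → Bool, max (⨆ i, ∑ n, rsign (s n) * g k i n) 0)
        ≤ ∑ s : Fin N → Bool, max (⨆ i, ∑ n, rsign (s n) * g (k+1) i n) 0 := by
    intro k
    by_cases hk : k < N
    · set κ : Fin N := ⟨k, hk⟩ with hκ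
      have hC0 : 0 ≤ C := (abs_nonneg _).trans (hC (Classical.arbitrary ι) κ)
      apply le_of_mul_le_mul_left _ (zero_lt_two (α := ℝ))
      rw [sum_flip κ, sum_flip κ]
      apply Finset.sum_le_sum
      intro s _
      have expand : ∀ (v : ι → Fin N → ℝ) (c : Bool) (i : ι),
          (∑ n, rsign (Function.update s κ c n) * v i n)
            = (∑ n ∈ Finset.univ.erase κ, rsign (s n) * v i n) + rsign c * v i κ := by
        intro v c i
        rw [← Finset.add_sum_erase Finset.univ
          (fun n => rsign (Function.update s κ c n) * v i n) (Finset.mem_univ κ)]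
        rw [Function.update_self, add_comm]
        congr 1
        apply Finset.sum_congr rfl
        intro n hn
        rw [Function.update_of_ne (Finset.ne_of_mem_erase hn)]
      set a : ι → ℝ := fun i => ∑ n ∈ Finset.univ.erase κ, rsign (s n) * g k i n with hadef
      have herase : ∀ i,
          (∑ n ∈ Finset.univ.erase κ, rsign (s n) * g (k+1) i n) = a i := by
        intro i
        apply Finset.sum_congr rfl
        intro n hn
        have hnκ : (n : ℕ) ≠ k := by
          intro h
          exact Finset.ne_of_mem_erase hn (Fin.ext h)
        congr 1
        simp only [hg]
        by_cases h : (n : ℕ) < k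
        · rw [if_pos h, if_pos (Nat.lt_succ_of_lt h)]
        · rw [if_neg h, if_neg (by omega)]
      have ha : ∀ i, |a i| ≤ (N : ℝ) * (L * C) := by
        intro i
        calc |a i| ≤ ∑ n ∈ Finset.univ.erase κ, |rsign (s n) * g k i n| :=
              Finset.abs_sum_le_sum_abs _ _
          _ = ∑ n ∈ Finset.univ.erase κ, |g k i n| := by
              simp [abs_mul, abs_rsign]
          _ ≤ ∑ _n ∈ Finset.univ.erase κ, (L * C) :=
              Finset.sum_le_sum (fun n _ => hgb k i n)
          _ = ((Finset.univ.erase κ).card : ℝ) * (L * C) := by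
              rw [Finset.sum_const, nsmul_eq_mul]
          _ ≤ (N : ℝ) * (L * C) := by
              apply mul_le_mul_of_nonneg_right _ (mul_nonneg hL hC0)
              have h1 : (Finset.univ.erase κ).card ≤ N := by
                calc (Finset.univ.erase κ).card ≤ (Finset.univ : Finset (Fin N)).card :=
                      Finset.card_erase_le
                  _ = N := by simp
              exact_mod_cast h1
      have hκk : ¬ ((κ : ℕ) < k) := by simp [hκ]
      have hκk1 : (κ : ℕ) < k + 1 := by simp [hκ]
      have hgκ1 : ∀ i, g k i κ = φ (b i κ) := fun i => by
        simp only [hg]; rw [if_neg hκk]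
      have hgκ2 : ∀ i, g (k+1) i κ = L * b i κ := fun i => by
        simp only [hg]; rw [if_pos hκk1]
      have hrs1 : rsign true = 1 := by simp [rsign]
      have hrs2 : rsign false = -1 := by simp [rsign]
      have e1 : ∀ i, (∑ n, rsign (Function.update s κ true n) * g k i n)
          = a i + φ (b i κ) := by
        intro i
        rw [expand (g k) true i, hgκ1 i, hrs1, one_mul]
      have e2 : ∀ i, (∑ n, rsign (Function.update s κ false n) * g k i n)
          = a i - φ (b i κ) := by
        intro i
        rw [expand (g k) false i, hgκ1 i, hrs2, neg_one_mul, ← sub_eq_add_neg]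
      have e3 : ∀ i, (∑ n, rsign (Function.update s κ true n) * g (k+1) i n)
          = a i + L * b i κ := by
        intro i
        rw [expand (g (k+1)) true i, hgκ2 i, herase i, hrs1, one_mul]
      have e4 : ∀ i, (∑ n, rsign (Function.update s κ false n) * g (k+1) i n)
          = a i - L * b i κ := by
        intro i
        rw [expand (g (k+1)) false i, hgκ2 i, herase i, hrs2, neg_one_mul, ← sub_eq_add_neg]
      simp only [e1, e2, e3, e4]
      exact key φ L hL hlip hφ0 a (fun i => b i κ) ((N : ℝ) * (L * C)) C ha
        (fun i => hC i κ)
    · apply le_of_eq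
      apply Finset.sum_congr rfl
      intro s _
      have he : ∀ i (n : Fin N), g k i n = g (k+1) i n := by
        intro i n
        have h : (n : ℕ) < k := lt_of_lt_of_le n.isLt (not_lt.1 hk)
        simp only [hg]
        rw [if_pos h, if_pos (Nat.lt_succ_of_lt h)]
      simp only [he]
  have main : ∀ k : ℕ,
      (∑ s : Fin N → Bool, max (⨆ i, ∑ n, rsign (s n) * g 0 i n) 0)
        ≤ ∑ s : Fin N → Bool, max (⨆ i, ∑ n, rsign (s n) * g k i n) 0 := by
    intro k
    induction k with
    | zero => exact le_refl _
    | succ k ih => exact ih.trans (step k)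
  have h0 : ∀ i (n : Fin N), g 0 i n = φ (b i n) := by
    intro i n; simp [hg]
  have hN : ∀ i (n : Fin N), g N i n = L * b i n := by
    intro i n; simp [hg, n.isLt]
  have := main N
  simp only [h0, hN] at this
  exact this

lemma core {ι : Type*} [Nonempty ι] {N : ℕ} (φ : ℝ → ℝ) (L : ℝ) (hL : 0 ≤ L)
    (hlip : ∀ s t, |φ s - φ t| ≤ L * |s - t|) (hφ0 : φ 0 = 0)
    (b : ι → Fin N → ℝ) (C : ℝ) (hC : ∀ i n, |b i n| ≤ C) :
    ∑ s : Fin N → Bool, ⨆ i, |∑ n, rsign (s n) * φ (b i n)|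
      ≤ 2 * L * ∑ s : Fin N → Bool, ⨆ i, |∑ n, rsign (s n) * b i n| := by
  have hφ' : ∀ t : ℝ, |φ t| ≤ L * |t| := by
    intro t
    have h := hlip t 0
    rwa [hφ0, sub_zero, sub_zero] at h
  have hsb : ∀ (s : Fin N → Bool) (v : Fin N → ℝ) (D : ℝ), (∀ n, |v n| ≤ D) →
      |∑ n, rsign (s n) * v n| ≤ (N : ℝ) * D := by
    intro s v D hv
    calc |∑ n, rsign (s n) * v n| ≤ ∑ n, |rsign (s n) * v n| :=
          Finset.abs_sum_le_sum_abs _ _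
      _ = ∑ n, |v n| := by simp [abs_mul, abs_rsign]
      _ ≤ ∑ _n : Fin N, D := Finset.sum_le_sum (fun n _ => hv n)
      _ = (N : ℝ) * D := by rw [Finset.sum_const, nsmul_eq_mul]; simp
  have hTb : ∀ (s : Fin N → Bool) i, |∑ n, rsign (s n) * φ (b i n)| ≤ (N : ℝ) * (L * C) :=
    fun s i => hsb s _ _ (fun n => (hφ' (b i n)).trans (mul_le_mul_of_nonneg_left (hC i n) hL))
  have hUb : ∀ (s : Fin N → Bool) i, |∑ n, rsign (s n) * b i n| ≤ (N : ℝ) * C :=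
    fun s i => hsb s _ _ (fun n => hC i n)
  have bT : ∀ s : Fin N → Bool,
      BddAbove (Set.range fun i => ∑ n, rsign (s n) * φ (b i n)) :=
    fun s => bdd_of_abs_le (hTb s)
  have bUabs : ∀ s : Fin N → Bool,
      BddAbove (Set.range fun i => |∑ n, rsign (s n) * b i n|) :=
    fun s => bdd_of_abs_le (fun i => by rw [abs_abs]; exact hUb s i)
  have negT : ∀ (s : Fin N → Bool) i,
      -(∑ n, rsign (s n) * φ (b i n)) = ∑ n, rsign (!(s n)) * φ (b i n) := by
    intro s i
    rw [← Finset.sum_neg_distrib]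
    apply Finset.sum_congr rfl
    intro n _
    rw [rsign_not, neg_mul]
  have stepA : ∀ s : Fin N → Bool, (⨆ i, |∑ n, rsign (s n) * φ (b i n)|)
      ≤ max (⨆ i, ∑ n, rsign (s n) * φ (b i n)) 0
        + max (⨆ i, ∑ n, rsign (!(s n)) * φ (b i n)) 0 := by
    intro s
    apply ciSup_le
    intro i
    rcases abs_cases (∑ n, rsign (s n) * φ (b i n)) with ⟨h, _⟩ | ⟨h, _⟩
    · rw [h]
      exact le_add_of_le_of_nonneg
        (le_max_of_le_left (le_ciSup (bT s) i)) (le_max_right _ _)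
    · rw [h, negT s i]
      exact le_add_of_nonneg_of_le (le_max_right _ _)
        (le_max_of_le_left (le_ciSup (bT (fun n => !(s n))) i))
  have flipinv : Function.Involutive (fun s : Fin N → Bool => fun n => !(s n)) :=
    fun s => funext fun n => Bool.not_not _
  have hflip : ∑ s : Fin N → Bool, max (⨆ i, ∑ n, rsign (!(s n)) * φ (b i n)) 0
      = ∑ s : Fin N → Bool, max (⨆ i, ∑ n, rsign (s n) * φ (b i n)) 0 :=
    Fintype.sum_bijective _ flipinv.bijective _ _ (fun s => rfl)
  have stepAsum : ∑ s : Fin N → Bool, ⨆ i, |∑ n, rsign (s n) * φ (b i n)|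
      ≤ 2 * ∑ s : Fin N → Bool, max (⨆ i, ∑ n, rsign (s n) * φ (b i n)) 0 := by
    calc ∑ s : Fin N → Bool, ⨆ i, |∑ n, rsign (s n) * φ (b i n)|
        ≤ ∑ s : Fin N → Bool, (max (⨆ i, ∑ n, rsign (s n) * φ (b i n)) 0
            + max (⨆ i, ∑ n, rsign (!(s n)) * φ (b i n)) 0) :=
          Finset.sum_le_sum (fun s _ => stepA s)
      _ = ∑ s : Fin N → Bool, max (⨆ i, ∑ n, rsign (s n) * φ (b i n)) 0
            + ∑ s : Fin N → Bool, max (⨆ i, ∑ n, rsign (!(s n)) * φ (b i n)) 0 :=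
          Finset.sum_add_distrib
      _ = 2 * ∑ s : Fin N → Bool, max (⨆ i, ∑ n, rsign (s n) * φ (b i n)) 0 := by
          rw [hflip]; ring
  have stepB := comparison φ L hL hlip hφ0 b C hC
  have stepC : ∀ s : Fin N → Bool,
      max (⨆ i, ∑ n, rsign (s n) * (L * b i n)) 0
        ≤ L * ⨆ i, |∑ n, rsign (s n) * b i n| := by
    intro s
    have hQ0 : 0 ≤ ⨆ i, |∑ n, rsign (s n) * b i n| :=
      (abs_nonneg _).trans (le_ciSup (bUabs s) (Classical.arbitrary ι))
    apply max_le _ (mul_nonneg hL hQ0)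
    apply ciSup_le
    intro i
    have hLU : (∑ n, rsign (s n) * (L * b i n)) = L * ∑ n, rsign (s n) * b i n := by
      rw [Finset.mul_sum]
      apply Finset.sum_congr rfl
      intro n _
      ring
    rw [hLU]
    calc L * ∑ n, rsign (s n) * b i n ≤ L * |∑ n, rsign (s n) * b i n| :=
          mul_le_mul_of_nonneg_left (le_abs_self _) hL
      _ ≤ L * ⨆ i, |∑ n, rsign (s n) * b i n| :=
          mul_le_mul_of_nonneg_left (le_ciSup (bUabs s) i) hL
  calc ∑ s : Fin N → Bool, ⨆ i, |∑ n, rsign (s n) * φ (b i n)|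
      ≤ 2 * ∑ s : Fin N → Bool, max (⨆ i, ∑ n, rsign (s n) * φ (b i n)) 0 := stepAsum
    _ ≤ 2 * ∑ s : Fin N → Bool, max (⨆ i, ∑ n, rsign (s n) * (L * b i n)) 0 := by
        linarith [stepB]
    _ ≤ 2 * ∑ s : Fin N → Bool, (L * ⨆ i, |∑ n, rsign (s n) * b i n|) := by
        have := Finset.sum_le_sum (fun s (_ : s ∈ Finset.univ) => stepC s)
        linarith [this]
    _ = 2 * L * ∑ s : Fin N → Bool, ⨆ i, |∑ n, rsign (s n) * b i n| := by
        rw [← Finset.mul_sum, ← mul_assoc]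

end RadCon

/-- Ledoux–Talagrand contraction principle with absolute values: for points
`x_1,…,x_N`, a class `F = {F i}` of real functions uniformly bounded on the points, and a
Lipschitz function `φ` with constant `L` and `φ(0) = 0`,
`E[ sup_f |(1/N) Σ_n r_n φ(f(x_n))| ] ≤ 2L · E[ sup_f |(1/N) Σ_n r_n f(x_n)| ]`.
The expectation over the i.i.d. uniform signs is written as the average over all `2^N`
sign patterns `s : Fin N → Bool`. -/
theorem rademacher_contraction
    {X : Type*} {N : ℕ} {ι : Type*} [Nonempty ι]
    (x : Fin N → X) (F : ι → X → ℝ)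
    (C : ℝ) (hC : ∀ i n, |F i (x n)| ≤ C)
    (φ : ℝ → ℝ) (L : ℝ) (hL : 0 ≤ L)
    (hlip : ∀ s t, |φ s - φ t| ≤ L * |s - t|) (hφ0 : φ 0 = 0) :
    (∑ s : Fin N → Bool,
        ⨆ i, |((1 : ℝ) / N) * ∑ n, rsign (s n) * φ (F i (x n))|) / 2 ^ N
      ≤ 2 * L * ((∑ s : Fin N → Bool,
        ⨆ i, |((1 : ℝ) / N) * ∑ n, rsign (s n) * F i (x n)|) / 2 ^ N) := by
  
  have hc : (0:ℝ) ≤ 1 / N := by positivity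
  have habs : ∀ X : ℝ, |(1 : ℝ) / N * X| = 1 / N * |X| := fun X => by
    rw [abs_mul, abs_of_nonneg hc]
  simp only [habs]
  have hpull1 : ∀ s : Fin N → Bool,
      (⨆ i, (1 : ℝ) / N * |∑ n, rsign (s n) * φ (F i (x n))|)
        = (1 : ℝ) / N * ⨆ i, |∑ n, rsign (s n) * φ (F i (x n))| :=
    fun s => (Real.mul_iSup_of_nonneg hc _).symm
  have hpull2 : ∀ s : Fin N → Bool,
      (⨆ i, (1 : ℝ) / N * |∑ n, rsign (s n) * F i (x n)|)
        = (1 : ℝ) / N * ⨆ i, |∑ n, rsign (s n) * F i (x n)| :=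
    fun s => (Real.mul_iSup_of_nonneg hc _).symm
  simp only [hpull1, hpull2]
  rw [← Finset.mul_sum, ← Finset.mul_sum]
  set P := ∑ s : Fin N → Bool, ⨆ i, |∑ n, rsign (s n) * φ (F i (x n))| with hPdef
  set Q := ∑ s : Fin N → Bool, ⨆ i, |∑ n, rsign (s n) * F i (x n)| with hQdef
  have hcore : P ≤ 2 * L * Q :=
    RadCon.core φ L hL hlip hφ0 (fun i n => F i (x n)) C (fun i n => hC i n)
  have hinv : (0:ℝ) ≤ ((2:ℝ) ^ N)⁻¹ := by positivity
  have h' := mul_le_mul_of_nonneg_right (mul_le_mul_of_nonneg_left hcore hc) hinv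
  calc (1:ℝ) / N * P / 2 ^ N = ((1:ℝ) / N * P) * ((2:ℝ) ^ N)⁻¹ := by ring
    _ ≤ ((1:ℝ) / N * (2 * L * Q)) * ((2:ℝ) ^ N)⁻¹ := h'
    _ = 2 * L * ((1:ℝ) / N * Q / 2 ^ N) := by ring
end
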